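/- For all integers ℓ ≥ 1 and 0 ≤ j ≤ ℓ−1 one has, in K = ℂ(q,t,Z): B_j^{(ℓ)}(Z) = t^{−j} · D̄_j^{(ℓ−1)}(Z⁻¹) · ( (t⁻¹Z q^{−(ℓ−2j)+1};q)_{ℓ−j} / (Z q^{−(ℓ−2j)+1};q)_{ℓ−j} ) · ( (Zq;q)_j / (t⁻¹Zq;q)_j ). -/

import Mathlib

set_option synthInstance.maxHeartbeats 1000000
set_option maxHeartbeats 4000000


/-!
Rational-function identities over `K = ℂ(q,t,Z)` underlying the expansion of
`E_ℓ(X)𝟏₀` and `𝟏₀E_ℓ(X)𝟏₀` in the double affine Hecke algebra of type SL₂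
(with `Z` playing the role of `Y⁻²`).
-/

noncomputable section

/-- The field `K = ℂ(q,t,Z)` of rational functions in three indeterminates. -/
abbrev K : Type := FractionRing (MvPolynomial (Fin 3) ℂ)

/-- The indeterminate `q`. -/
def q : K := algebraMap (MvPolynomial (Fin 3) ℂ) K (MvPolynomial.X 0)

/-- The indeterminate `t`. -/
def t : K := algebraMap (MvPolynomial (Fin 3) ℂ) K (MvPolynomial.X 1)

/-- The indeterminate `Z` (playing the role of `Y⁻²`). -/
def Z : K := algebraMap (MvPolynomial (Fin 3) ℂ) K (MvPolynomial.X 2)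

/-- The `q`-Pochhammer symbol `(a;q)_n = ∏_{i=0}^{n-1} (1 - a qⁱ)`. -/
def poch (a : K) (n : ℕ) : K := ∏ i ∈ Finset.range n, (1 - a * q ^ i)

/-- The `q,t`-binomial coefficient `[ℓ j]_{q,t}`. -/
def qtBinom (l j : ℕ) : K :=
  (poch q l / poch t l) / ((poch q j / poch t j) * (poch q (l - j) / poch t (l - j)))

/-- The `Y`-binomial coefficient
`Bin(ℓ,j;z) = (t⁻¹z q^{−(j−1)};q)_{ℓ−j} (tz q^{ℓ−2j};q)_j / ((zq;q)_{ℓ−j} (z q^{−j};q)_j)`. -/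
def Bin (l j : ℕ) (z : K) : K :=
  poch (t⁻¹ * z * q ^ (1 - (j : ℤ))) (l - j) * poch (t * z * q ^ ((l : ℤ) - 2 * j)) j
    / (poch (z * q) (l - j) * poch (z * q ^ (-(j : ℤ))) j)

/-- `D̄_j^{(ℓ)}(z) = t^{ℓ−j}·[ℓ j]_{q,t}·Bin(ℓ,j;z)·((1−tq^{ℓ−j})/(1−tq^ℓ))·((1−tzq^{ℓ−j})/(1−tzq^{ℓ−2j}))`,
equal to `t^{(ℓ+1)/2} D_j^{(ℓ)}(Y)` of the paper under `z = Y⁻²`. -/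
def Dbar (l j : ℕ) (z : K) : K :=
  t ^ ((l : ℤ) - j) * qtBinom l j * Bin l j z
    * ((1 - t * q ^ ((l : ℤ) - j)) / (1 - t * q ^ l))
    * ((1 - t * z * q ^ ((l : ℤ) - j)) / (1 - t * z * q ^ ((l : ℤ) - 2 * j)))

/-- The universal coefficient
`B_j^{(ℓ)}(z) = q^j·[ℓ j]_{q,t}·((1−q^{ℓ−j})/(1−q^ℓ))
·(t⁻¹zq^{−(ℓ−j−1)};q)_{ℓ−j}·(tzq^{−(ℓ−2j−1)};q)_{ℓ−j−1}
/((zq^{−(ℓ−2j−1)};q)_{ℓ−j}·(zq^{−(ℓ−j−1)};q)_{ℓ−j−1})`. -/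
def Bcoef (l j : ℕ) (z : K) : K :=
  q ^ j * qtBinom l j * ((1 - q ^ ((l : ℤ) - j)) / (1 - q ^ l))
    * (poch (t⁻¹ * z * q ^ (-((l : ℤ) - j - 1))) (l - j)
        * poch (t * z * q ^ (-((l : ℤ) - 2 * j - 1))) (l - j - 1))
    / (poch (z * q ^ (-((l : ℤ) - 2 * j - 1))) (l - j)
        * poch (z * q ^ (-((l : ℤ) - j - 1))) (l - j - 1))

lemma algMap_inj : Function.Injective (algebraMap (MvPolynomial (Fin 3) ℂ) K) :=
  IsFractionRing.injective _ _

lemma q_ne : (q : K) ≠ 0 :=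
  fun h => MvPolynomial.X_ne_zero (R := ℂ) (0 : Fin 3) (algMap_inj (by simpa [q] using h))

lemma t_ne : (t : K) ≠ 0 :=
  fun h => MvPolynomial.X_ne_zero (R := ℂ) (1 : Fin 3) (algMap_inj (by simpa [t] using h))

lemma Z_ne : (Z : K) ≠ 0 :=
  fun h => MvPolynomial.X_ne_zero (R := ℂ) (2 : Fin 3) (algMap_inj (by simpa [Z] using h))

lemma nat_mono_inj (a1 b1 c1 a2 b2 c2 : ℕ)
    (h : (q:K)^a1 * t^b1 * Z^c1 = q^a2 * t^b2 * Z^c2) : a1 = a2 ∧ b1 = b2 ∧ c1 = c2 := by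
  have hpoly : (MvPolynomial.X 0 ^ a1 * MvPolynomial.X 1 ^ b1 * MvPolynomial.X 2 ^ c1 :
      MvPolynomial (Fin 3) ℂ) = MvPolynomial.X 0 ^ a2 * MvPolynomial.X 1 ^ b2 * MvPolynomial.X 2 ^ c2 := by
    apply algMap_inj
    simpa [q, t, Z, map_mul, map_pow] using h
  have key : ∀ v : Fin 3 → ℂ, v 0 ^ a1 * v 1 ^ b1 * v 2 ^ c1 = v 0 ^ a2 * v 1 ^ b2 * v 2 ^ c2 := by
    intro v
    have := congrArg (MvPolynomial.eval v) hpoly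
    simpa [map_mul, map_pow] using this
  have h2 : ∀ m k : ℕ, (2:ℂ)^m = 2^k → m = k := by
    intro m k hmk
    have : ((2^m : ℕ) : ℂ) = ((2^k : ℕ) : ℂ) := by push_cast; exact hmk
    exact Nat.pow_right_injective (le_refl 2) (Nat.cast_injective this)
  refine ⟨h2 _ _ ?_, h2 _ _ ?_, h2 _ _ ?_⟩
  · simpa using key (fun i => if i = 0 then 2 else 1)
  · simpa using key (fun i => if i = 1 then 2 else 1)
  · simpa using key (fun i => if i = 2 then 2 else 1)

lemma mono_ne_one (a b c : ℤ) (h : ¬(a = 0 ∧ b = 0 ∧ c = 0)) : (q:K)^a * t^b * Z^c ≠ 1 := by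
  intro heq
  have expand : ∀ (u : K), u ≠ 0 → ∀ e : ℤ, u ^ (e.toNat) = u ^ e * u ^ ((-e).toNat) := by
    intro u hu e
    rw [← zpow_natCast u e.toNat, ← zpow_natCast u (-e).toNat, ← zpow_add₀ hu]
    congr 1; omega
  have key : (q:K)^a.toNat * t^b.toNat * Z^c.toNat = q^(-a).toNat * t^(-b).toNat * Z^(-c).toNat := by
    rw [expand q q_ne a, expand t t_ne b, expand Z Z_ne c]
    rw [show ((q:K)^a * q^(-a).toNat) * (t^b * t^(-b).toNat) * (Z^c * Z^(-c).toNat)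
        = (q^a*t^b*Z^c) * (q^(-a).toNat * t^(-b).toNat * Z^(-c).toNat) from by ring, heq, one_mul]
  obtain ⟨ha, hb, hc⟩ := nat_mono_inj _ _ _ _ _ _ key
  omega

/-- shifted Pochhammer product -/
def PP (x : K) (e : ℤ) (n : ℕ) : K := ∏ i ∈ Finset.range n, (1 - x * q ^ (e + i))

lemma poch_eq_PP (y : K) (e : ℤ) (k : ℕ) : poch (y * q ^ e) k = PP y e k := by
  refine Finset.prod_congr rfl fun i _ => ?_
  rw [mul_assoc, ← zpow_natCast q i, ← zpow_add₀ q_ne]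

lemma poch_q_eq_PP (y : K) (k : ℕ) : poch (y * q) k = PP y 1 k := by
  rw [show (q:K) = q ^ (1:ℤ) from (zpow_one q).symm, poch_eq_PP]

lemma PP_congr (y : K) {e e' : ℤ} (k : ℕ) (h : e = e') : PP y e k = PP y e' k := by rw [h]

lemma PP_succ_left (y : K) (e : ℤ) (k : ℕ) :
    PP y e (k + 1) = (1 - y * q ^ e) * PP y (e + 1) k := by
  rw [PP, Finset.prod_range_succ']
  rw [mul_comm]
  congr 1
  · norm_num
  · refine Finset.prod_congr rfl fun i _ => ?_
    congr 2
    push_cast; ring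

lemma PP_add (y : K) (e : ℤ) (a b : ℕ) :
    PP y e (a + b) = PP y e a * PP y (e + a) b := by
  rw [PP, Finset.prod_range_add]
  congr 1
  refine Finset.prod_congr rfl fun i _ => ?_
  congr 2
  push_cast; ring

lemma one_sub_mono_ne (a b c : ℤ) (h : ¬(a = 0 ∧ b = 0 ∧ c = 0)) :
    (1:K) - q^a * t^b * Z^c ≠ 0 :=
  sub_ne_zero.mpr (Ne.symm (mono_ne_one a b c h))

lemma factor_ne (y : K) (b c : ℤ) (hy : y = t ^ b * Z ^ c) (hbc : ¬(b = 0 ∧ c = 0)) (E : ℤ) :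
    (1:K) - y * q ^ E ≠ 0 := by
  subst hy
  have : (t:K) ^ b * Z ^ c * q ^ E = q ^ E * t ^ b * Z ^ c := by ring
  rw [this]
  exact one_sub_mono_ne E b c (by tauto)

lemma PP_ne (y : K) (b c : ℤ) (hy : y = t ^ b * Z ^ c) (hbc : ¬(b = 0 ∧ c = 0)) (e : ℤ) (k : ℕ) :
    PP y e k ≠ 0 :=
  Finset.prod_ne_zero_iff.mpr fun i _ => factor_ne y b c hy hbc (e + i)

lemma hZ_eq : (Z:K) = t ^ (0:ℤ) * Z ^ (1:ℤ) := by simp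
lemma htZ_eq : (t*Z:K) = t ^ (1:ℤ) * Z ^ (1:ℤ) := by simp
lemma hxZ_eq : (t⁻¹*Z:K) = t ^ (-1:ℤ) * Z ^ (1:ℤ) := by simp

lemma poch_q_ne (k : ℕ) : poch q k ≠ 0 := by
  refine Finset.prod_ne_zero_iff.mpr fun i _ => ?_
  have : (q:K) * q ^ i = q ^ ((1 + i : ℕ):ℤ) * t ^ (0:ℤ) * Z ^ (0:ℤ) := by
    rw [zpow_zero, zpow_zero, mul_one, mul_one, zpow_natCast, pow_add, pow_one]
  rw [this]
  exact one_sub_mono_ne _ _ _ (by push_cast; omega)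

lemma poch_t_ne (k : ℕ) : poch t k ≠ 0 := by
  refine Finset.prod_ne_zero_iff.mpr fun i _ => ?_
  have : (t:K) * q ^ i = q ^ ((i:ℤ)) * t ^ (1:ℤ) * Z ^ (0:ℤ) := by
    rw [zpow_zero, zpow_one, mul_one, zpow_natCast]; ring
  rw [this]
  exact one_sub_mono_ne _ _ _ (by simp)

lemma one_sub_q_pow_ne (k : ℕ) (hk : 1 ≤ k) : (1:K) - q ^ k ≠ 0 := by
  have : (q:K) ^ k = q ^ ((k:ℤ)) * t ^ (0:ℤ) * Z ^ (0:ℤ) := by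
    rw [zpow_zero, zpow_zero, mul_one, mul_one, zpow_natCast]
  rw [this]
  exact one_sub_mono_ne _ _ _ (by omega)

lemma one_sub_q_mul_ne (k : ℕ) : (1:K) - q * q ^ k ≠ 0 := by
  have : (q:K) * q ^ k = q ^ (k + 1) := by rw [pow_succ]; ring
  rw [this]
  exact one_sub_q_pow_ne (k+1) (by omega)

lemma one_sub_t_mul_ne (k : ℕ) : (1:K) - t * q ^ k ≠ 0 := by
  have : (t:K) * q ^ k = q ^ ((k:ℤ)) * t ^ (1:ℤ) * Z ^ (0:ℤ) := by
    rw [zpow_zero, zpow_one, mul_one, zpow_natCast]; ring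
  rw [this]
  exact one_sub_mono_ne _ _ _ (by simp)

lemma PP_flip (y : K) (hy : y ≠ 0) (e : ℤ) (k : ℕ) :
    PP y⁻¹ e k
      = (∏ i ∈ Finset.range k, (-(y⁻¹ * q ^ (e + (i:ℤ))))) * PP y (1 - e - k) k := by
  have hrefl : PP y (1 - e - k) k = ∏ i ∈ Finset.range k, (1 - y * q ^ (-(e + (i:ℤ)))) := by
    rw [PP, ← Finset.prod_range_reflect]
    refine Finset.prod_congr rfl fun i hi => ?_
    have hik : i < k := Finset.mem_range.mp hi
    congr 2
    rw [show ((k - 1 - i : ℕ):ℤ) = (k:ℤ) - 1 - i from by omega]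
    ring
  rw [hrefl, ← Finset.prod_mul_distrib]
  refine Finset.prod_congr rfl fun i _ => ?_
  have hq1 : (q:K) ^ (e + (i:ℤ)) * q ^ (-(e + (i:ℤ))) = 1 := by
    rw [← zpow_add₀ q_ne, show (e + (i:ℤ)) + -(e + (i:ℤ)) = 0 from by ring, zpow_zero]
  linear_combination (-(y⁻¹ * y)) * hq1 - inv_mul_cancel₀ hy

lemma combine (a3 a4 c1 c2 w1 w2 v1 v2 T : K) (h3 : a3 ≠ 0) (h4 : a4 ≠ 0)
    (hv1 : v1 ≠ 0) (hv2 : v2 ≠ 0) (hc : c1 * c2 = T) :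
    (a3 * c1 * w1 * (a4 * c2 * w2)) / (a3 * v1 * (a4 * v2)) = T * (w1 * w2) / (v1 * v2) := by
  rw [← hc, div_eq_div_iff (mul_ne_zero (mul_ne_zero h3 hv1) (mul_ne_zero h4 hv2))
    (mul_ne_zero hv1 hv2)]
  ring

lemma BinInv (j n : ℕ) :
    Bin (j + n) j Z⁻¹
      = (t ^ j * (t ^ n)⁻¹) * (PP (t * Z) ((j:ℤ) - n) n * PP (t⁻¹ * Z) (1 - (n:ℤ)) j)
          / (PP Z (-(n:ℤ)) n * PP Z 1 j) := by
  rw [Bin, show j + n - j = n from by omega]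
  rw [show (t⁻¹ * Z⁻¹ : K) = (t * Z)⁻¹ from (mul_inv t Z).symm]
  rw [show (t * Z⁻¹ : K) = (t⁻¹ * Z)⁻¹ from by rw [mul_inv, inv_inv]]
  rw [show ((j + n : ℕ):ℤ) - 2 * j = (n:ℤ) - j from by push_cast; ring]
  rw [poch_eq_PP, poch_eq_PP, poch_q_eq_PP, poch_eq_PP]
  rw [PP_flip (t * Z) (mul_ne_zero t_ne Z_ne), PP_flip (t⁻¹ * Z) (mul_ne_zero (inv_ne_zero t_ne) Z_ne),
    PP_flip Z Z_ne, PP_flip Z Z_ne]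
  rw [PP_congr (t * Z) n (show 1 - (1 - (j:ℤ)) - n = (j:ℤ) - n from by ring)]
  rw [PP_congr (t⁻¹ * Z) j (show 1 - ((n:ℤ) - j) - j = 1 - (n:ℤ) from by ring)]
  rw [PP_congr Z n (show 1 - 1 - (n:ℤ) = -(n:ℤ) from by ring)]
  rw [PP_congr Z j (show 1 - -(j:ℤ) - j = 1 from by ring)]
  have hA1 : (∏ i ∈ Finset.range n, (-((t * Z)⁻¹ * q ^ ((1 - (j:ℤ)) + (i:ℤ)))))
      = (∏ i ∈ Finset.range n, (-(Z⁻¹ * q ^ ((1:ℤ) + (i:ℤ))))) * (t⁻¹ * q ^ (-(j:ℤ))) ^ n := by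
    rw [show ((t⁻¹ * q ^ (-(j:ℤ))) ^ n : K) = ∏ _i ∈ Finset.range n, (t⁻¹ * q ^ (-(j:ℤ))) from by
      rw [Finset.prod_const, Finset.card_range], ← Finset.prod_mul_distrib]
    refine Finset.prod_congr rfl fun i _ => ?_
    rw [show (q:K) ^ ((1 - (j:ℤ)) + (i:ℤ)) = q ^ ((1:ℤ) + (i:ℤ)) * q ^ (-(j:ℤ)) from by
      rw [← zpow_add₀ q_ne]; congr 1; ring]
    rw [mul_inv]
    ring
  have hA2 : (∏ i ∈ Finset.range j, (-((t⁻¹ * Z)⁻¹ * q ^ (((n:ℤ) - j) + (i:ℤ)))))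
      = (∏ i ∈ Finset.range j, (-(Z⁻¹ * q ^ (-(j:ℤ) + (i:ℤ))))) * (t * q ^ ((n:ℤ))) ^ j := by
    rw [show ((t * q ^ ((n:ℤ))) ^ j : K) = ∏ _i ∈ Finset.range j, (t * q ^ ((n:ℤ))) from by
      rw [Finset.prod_const, Finset.card_range], ← Finset.prod_mul_distrib]
    refine Finset.prod_congr rfl fun i _ => ?_
    rw [show (q:K) ^ (((n:ℤ) - j) + (i:ℤ)) = q ^ (-(j:ℤ) + (i:ℤ)) * q ^ ((n:ℤ)) from by
      rw [← zpow_add₀ q_ne]; congr 1; ring]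
    rw [mul_inv, inv_inv]
    ring
  rw [hA1, hA2]
  have hprod_ne : ∀ (y : K), y ≠ 0 → ∀ (k : ℕ) (e : ℤ),
      (∏ i ∈ Finset.range k, (-(y⁻¹ * q ^ (e + (i:ℤ))))) ≠ 0 := by
    intro y hy k e
    exact Finset.prod_ne_zero_iff.mpr fun i _ =>
      neg_ne_zero.mpr (mul_ne_zero (inv_ne_zero hy) (zpow_ne_zero _ q_ne))
  have hc : (t⁻¹ * q ^ (-(j:ℤ))) ^ n * (t * q ^ ((n:ℤ))) ^ j = t ^ j * (t ^ n)⁻¹ := by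
    rw [mul_pow, mul_pow, inv_pow]
    have h1 : ((q:K) ^ (-(j:ℤ))) ^ n * ((q:K) ^ ((n:ℤ))) ^ j = 1 := by
      rw [← zpow_natCast ((q:K) ^ (-(j:ℤ))) n, ← zpow_natCast ((q:K) ^ ((n:ℤ))) j,
        ← zpow_mul, ← zpow_mul, ← zpow_add₀ q_ne,
        show (-(j:ℤ)) * n + (n:ℤ) * j = 0 from by ring, zpow_zero]
    linear_combination ((t ^ n)⁻¹ * t ^ j) * h1
  exact combine _ _ _ _ _ _ _ _ _ (hprod_ne Z Z_ne n 1) (hprod_ne Z Z_ne j (-(j:ℤ)))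
    (PP_ne Z 0 1 hZ_eq (by omega) _ _) (PP_ne Z 0 1 hZ_eq (by omega) _ _) hc

lemma ratio_flip (j n : ℕ) :
    (1 - t * Z⁻¹ * q ^ (n:ℕ)) / (1 - t * Z⁻¹ * q ^ ((n:ℤ) - j))
      = q ^ (j:ℕ) * (1 - t⁻¹ * Z * q ^ (-(n:ℤ))) / (1 - t⁻¹ * Z * q ^ ((j:ℤ) - n)) := by
  have hqq : (q:K) ^ (n:ℕ) * q ^ (-(n:ℤ)) = 1 := by
    rw [← zpow_natCast q n, ← zpow_add₀ q_ne, show (n:ℤ) + -(n:ℤ) = 0 from by ring, zpow_zero]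
  have hqq2 : (q:K) ^ ((n:ℤ) - j) * q ^ ((j:ℤ) - n) = 1 := by
    rw [← zpow_add₀ q_ne, show ((n:ℤ) - j) + ((j:ℤ) - n) = 0 from by ring, zpow_zero]
  have h1 : (1:K) - t * Z⁻¹ * q ^ (n:ℕ)
      = -(t * Z⁻¹ * q ^ (n:ℕ)) * (1 - t⁻¹ * Z * q ^ (-(n:ℤ))) := by
    have huv : (t * Z⁻¹ * q ^ (n:ℕ)) * (t⁻¹ * Z * q ^ (-(n:ℤ))) = 1 := by
      rw [show (t * Z⁻¹ * q ^ (n:ℕ)) * (t⁻¹ * Z * q ^ (-(n:ℤ)))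
          = (t * t⁻¹) * (Z⁻¹ * Z) * (q ^ (n:ℕ) * q ^ (-(n:ℤ))) from by ring,
        mul_inv_cancel₀ t_ne, inv_mul_cancel₀ Z_ne, hqq]
      norm_num
    linear_combination -huv
  have h2 : (1:K) - t * Z⁻¹ * q ^ ((n:ℤ) - j)
      = -(t * Z⁻¹ * q ^ ((n:ℤ) - j)) * (1 - t⁻¹ * Z * q ^ ((j:ℤ) - n)) := by
    have huv : (t * Z⁻¹ * q ^ ((n:ℤ) - j)) * (t⁻¹ * Z * q ^ ((j:ℤ) - n)) = 1 := by
      rw [show (t * Z⁻¹ * q ^ ((n:ℤ) - j)) * (t⁻¹ * Z * q ^ ((j:ℤ) - n))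
          = (t * t⁻¹) * (Z⁻¹ * Z) * (q ^ ((n:ℤ) - j) * q ^ ((j:ℤ) - n)) from by ring,
        mul_inv_cancel₀ t_ne, inv_mul_cancel₀ Z_ne, hqq2]
      norm_num
    linear_combination -huv
  have hu : (t:K) * Z⁻¹ * q ^ (n:ℕ) = (t * Z⁻¹ * q ^ ((n:ℤ) - j)) * q ^ (j:ℕ) := by
    rw [show ((t:K) * Z⁻¹ * q ^ ((n:ℤ) - j)) * q ^ (j:ℕ)
        = t * Z⁻¹ * (q ^ ((n:ℤ) - j) * q ^ (j:ℕ)) from by ring]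
    congr 1
    rw [← zpow_natCast q j, ← zpow_add₀ q_ne, show (n:ℤ) - j + j = ((n:ℕ):ℤ) from by ring,
      zpow_natCast]
  rw [h1, h2, hu]
  have hu2 : ((t:K) * Z⁻¹ * q ^ ((n:ℤ) - j)) ≠ 0 :=
    mul_ne_zero (mul_ne_zero t_ne (inv_ne_zero Z_ne)) (zpow_ne_zero _ q_ne)
  have hB : (1:K) - t⁻¹ * Z * q ^ ((j:ℤ) - n) ≠ 0 := factor_ne (t⁻¹*Z) (-1) 1 hxZ_eq (by omega) _
  rw [div_eq_div_iff (mul_ne_zero (neg_ne_zero.mpr hu2) hB) hB]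
  ring

/-- **The identity `DinvtoB`**: for `ℓ ≥ 1` and `0 ≤ j ≤ ℓ−1`,
`B_j^{(ℓ)}(Z) = t^{−j}·D̄_j^{(ℓ−1)}(Z⁻¹)·((t⁻¹Zq^{−(ℓ−2j)+1};q)_{ℓ−j}/(Zq^{−(ℓ−2j)+1};q)_{ℓ−j})
·((Zq;q)_j/(t⁻¹Zq;q)_j)`. -/
theorem Bcoef_from_Dbar (l j : ℕ) (hl : 1 ≤ l) (hj : j ≤ l - 1) :
    Bcoef l j Z
      = t ^ (-(j : ℤ)) * Dbar (l - 1) j Z⁻¹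
          * (poch (t⁻¹ * Z * q ^ (-((l : ℤ) - 2 * j) + 1)) (l - j)
              / poch (Z * q ^ (-((l : ℤ) - 2 * j) + 1)) (l - j))
          * (poch (Z * q) j / poch (t⁻¹ * Z * q) j) := by
  obtain ⟨n, rfl⟩ : ∃ n, l = j + n + 1 := ⟨l - 1 - j, by omega⟩
  clear hl hj
  rw [show j + n + 1 - 1 = j + n from by omega]
  rw [Bcoef, Dbar, BinInv]
  rw [show j + n + 1 - j = n + 1 from by omega]
  rw [show n + 1 - 1 = n from rfl]
  -- integer exponent normalizations
  rw [show -(((j + n + 1 : ℕ):ℤ) - (j:ℤ) - 1) = -(n:ℤ) from by push_cast; ring]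
  rw [show -(((j + n + 1 : ℕ):ℤ) - 2 * (j:ℤ) - 1) = (j:ℤ) - n from by push_cast; ring]
  rw [show ((j + n + 1 : ℕ):ℤ) - (j:ℤ) = ((n + 1 : ℕ):ℤ) from by push_cast; ring]
  rw [show -(((j + n + 1 : ℕ):ℤ) - 2 * (j:ℤ)) + 1 = (j:ℤ) - n from by push_cast; ring]
  rw [show ((j + n : ℕ):ℤ) - (j:ℤ) = ((n : ℕ):ℤ) from by push_cast; ring]
  rw [show ((j + n : ℕ):ℤ) - 2 * (j:ℤ) = (n:ℤ) - (j:ℤ) from by push_cast; ring]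
  rw [show (t:K) ^ (-(j:ℤ)) = (t ^ j)⁻¹ from by rw [zpow_neg, zpow_natCast]]
  simp only [zpow_natCast]
  rw [ratio_flip]
  -- pochhammers to PP form
  rw [poch_eq_PP, poch_eq_PP, poch_eq_PP, poch_eq_PP, poch_eq_PP,
    poch_q_eq_PP, poch_q_eq_PP]
  -- qtBinom expansions
  rw [qtBinom, qtBinom]
  rw [show j + n + 1 - j = n + 1 from by omega, show j + n - j = n from by omega]
  rw [show poch q (j + n + 1) = poch q (j + n) * (1 - q * q ^ (j + n)) from by
    rw [poch, poch, Finset.prod_range_succ]]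
  rw [show poch t (j + n + 1) = poch t (j + n) * (1 - t * q ^ (j + n)) from by
    rw [poch, poch, Finset.prod_range_succ]]
  rw [show poch q (n + 1) = poch q n * (1 - q * q ^ n) from by
    rw [poch, poch, Finset.prod_range_succ]]
  rw [show poch t (n + 1) = poch t n * (1 - t * q ^ n) from by
    rw [poch, poch, Finset.prod_range_succ]]
  -- splitting of the (t⁻¹ Z)-Pochhammers
  have hxA : PP (t⁻¹ * Z) (-(n:ℤ)) (n + 1)
      = (1 - t⁻¹ * Z * q ^ (-(n:ℤ))) * PP (t⁻¹ * Z) (1 - (n:ℤ)) n := by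
    rw [PP_succ_left, PP_congr (t⁻¹ * Z) n (show -(n:ℤ) + 1 = 1 - (n:ℤ) from by ring)]
  have hxF4 : PP (t⁻¹ * Z) ((j:ℤ) - n) (n + 1)
      = (1 - t⁻¹ * Z * q ^ ((j:ℤ) - n)) * PP (t⁻¹ * Z) ((j:ℤ) + 1 - n) n := by
    rw [PP_succ_left, PP_congr (t⁻¹ * Z) n (show (j:ℤ) - n + 1 = (j:ℤ) + 1 - n from by ring)]
  have hxB : PP (t⁻¹ * Z) (1 - (n:ℤ)) n
      = PP (t⁻¹ * Z) (1 - (n:ℤ)) j * PP (t⁻¹ * Z) ((j:ℤ) + 1 - n) n / PP (t⁻¹ * Z) 1 j := by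
    rw [eq_div_iff (PP_ne (t⁻¹ * Z) (-1) 1 hxZ_eq (by omega) 1 j)]
    have h1 : PP (t⁻¹ * Z) (1 - (n:ℤ)) n * PP (t⁻¹ * Z) 1 j = PP (t⁻¹ * Z) (1 - (n:ℤ)) (n + j) := by
      rw [PP_add (t⁻¹ * Z) (1 - (n:ℤ)) n j,
        PP_congr (t⁻¹ * Z) j (show 1 - (n:ℤ) + n = 1 from by ring)]
    have h2 : PP (t⁻¹ * Z) (1 - (n:ℤ)) (j + n)
        = PP (t⁻¹ * Z) (1 - (n:ℤ)) j * PP (t⁻¹ * Z) ((j:ℤ) + 1 - n) n := by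
      rw [PP_add (t⁻¹ * Z) (1 - (n:ℤ)) j n,
        PP_congr (t⁻¹ * Z) n (show 1 - (n:ℤ) + j = (j:ℤ) + 1 - n from by ring)]
    rw [h1, show n + j = j + n from Nat.add_comm n j, h2]
  rw [hxA, hxB, hxF4]
  -- final rational-function identity
  have ne1 : PP Z ((j:ℤ) - n) (n+1) ≠ 0 := PP_ne Z 0 1 hZ_eq (by omega) _ _
  have ne2 : PP Z (-(n:ℤ)) n ≠ 0 := PP_ne Z 0 1 hZ_eq (by omega) _ _
  have ne3 : PP Z 1 j ≠ 0 := PP_ne Z 0 1 hZ_eq (by omega) _ _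
  have ne4 : PP (t⁻¹ * Z) 1 j ≠ 0 := PP_ne (t⁻¹ * Z) (-1) 1 hxZ_eq (by omega) _ _
  have ne5 : PP (t⁻¹ * Z) (1 - (n:ℤ)) j ≠ 0 := PP_ne (t⁻¹ * Z) (-1) 1 hxZ_eq (by omega) _ _
  have ne6 : PP (t⁻¹ * Z) ((j:ℤ) + 1 - n) n ≠ 0 := PP_ne (t⁻¹ * Z) (-1) 1 hxZ_eq (by omega) _ _
  have ne7 : PP (t * Z) ((j:ℤ) - n) n ≠ 0 := PP_ne (t * Z) 1 1 htZ_eq (by omega) _ _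
  have ne8 : (1:K) - t⁻¹ * Z * q ^ ((j:ℤ) - n) ≠ 0 := factor_ne (t⁻¹*Z) (-1) 1 hxZ_eq (by omega) _
  have ne9 : (1:K) - t⁻¹ * Z * q ^ (-(n:ℤ)) ≠ 0 := factor_ne (t⁻¹*Z) (-1) 1 hxZ_eq (by omega) _
  have ne10 : (1:K) - q ^ (j + n + 1) ≠ 0 := one_sub_q_pow_ne _ (by omega)
  have ne11 : poch q j ≠ 0 := poch_q_ne j
  have ne12 : poch t j ≠ 0 := poch_t_ne j
  have ne13 : poch q n ≠ 0 := poch_q_ne n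
  have ne14 : poch t n ≠ 0 := poch_t_ne n
  have ne15 : poch q (j + n) ≠ 0 := poch_q_ne (j + n)
  have ne16 : poch t (j + n) ≠ 0 := poch_t_ne (j + n)
  have ne17 : (1:K) - q * q ^ (j + n) ≠ 0 := one_sub_q_mul_ne (j + n)
  have ne18 : (1:K) - t * q ^ (j + n) ≠ 0 := one_sub_t_mul_ne (j + n)
  have ne19 : (1:K) - q * q ^ n ≠ 0 := one_sub_q_mul_ne n
  have ne20 : (1:K) - t * q ^ n ≠ 0 := one_sub_t_mul_ne n
  rw [show (1:K) - q ^ (n+1) = 1 - q * q ^ n from by ring]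
  rw [show (1:K) - q ^ (j+n+1) = 1 - q * q ^ (j+n) from by ring]
  set w1 := (q:K) ^ (-(n:ℤ))
  set w2 := (q:K) ^ ((j:ℤ) - (n:ℤ))
  set s1 := (1:K) - q * q ^ (j+n)
  set s2 := (1:K) - t * q ^ (j+n)
  set s3 := (1:K) - q * q ^ n
  set s4 := (1:K) - t * q ^ n
  set a1 := (1:K) - t⁻¹ * Z * w1
  set a2 := (1:K) - t⁻¹ * Z * w2
  set p1 := PP Z ((j:ℤ) - n) (n+1)
  set p2 := PP Z (-(n:ℤ)) n
  set p3 := PP Z 1 j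
  set p4 := PP (t⁻¹ * Z) 1 j
  set p5 := PP (t⁻¹ * Z) (1 - (n:ℤ)) j
  set p6 := PP (t⁻¹ * Z) ((j:ℤ) + 1 - n) n
  set p7 := PP (t * Z) ((j:ℤ) - n) n
  set r1 := poch q j
  set r2 := poch t j
  set r3 := poch q n
  set r4 := poch t n
  set r5 := poch q (j + n)
  set r6 := poch t (j + n)
  clear_value w1 w2 s1 s2 s3 s4 a1 a2 p1 p2 p3 p4 p5 p6 p7 r1 r2 r3 r4 r5 r6
  field_simp
  have h1 : s1 * s1⁻¹ = 1 := mul_inv_cancel₀ ne17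
  have h2 : s3 * s3⁻¹ = 1 := mul_inv_cancel₀ ne19
  have h3 : (t:K) ^ j * t⁻¹ ^ j = 1 := by
    rw [inv_pow]; exact mul_inv_cancel₀ (pow_ne_zero j t_ne)
  have h4 : (t:K) ^ n * t⁻¹ ^ n = 1 := by
    rw [inv_pow]; exact mul_inv_cancel₀ (pow_ne_zero n t_ne)
  have h5 : a2 * a2⁻¹ = 1 := mul_inv_cancel₀ ne8
  have h6 : p3 * p3⁻¹ = 1 := mul_inv_cancel₀ ne3
  set C : K := q ^ j * r5 * r2 * r4 * s4 * a1 * p5 * p6 * p7 * r6⁻¹ * s2⁻¹ * r1⁻¹ * r3⁻¹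
      * p4⁻¹ * p1⁻¹ * p2⁻¹ with hC
  linear_combination (-((q:K) ^ j * ((t:K) ^ j * t⁻¹ ^ j))) * h4 - (q:K) ^ j * h3

end
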